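/- Let μ be a self-similar measure on the middle-thirds Cantor set C. Then for all x = π(𝚒) except for at most countably many points (the endpoints of construction intervals), liminf_{r↓0} log μ([x, x+r])/log r = liminf_{r↓0} log μ([x-r, x+r])/log r. -/

import Mathlib

open Set MeasureTheory Filter
open scoped ENNReal Topology

/-- The coding map `π : {1,2}^ℕ → C` of the middle-thirds Cantor set, where the
symbol `1` (coded by `0 : Fin 2`) means "left" and `2` (coded by `1 : Fin 2`)
means "right". -/
noncomputable def cantorPi (i : ℕ → Fin 2) : ℝ :=
  ∑' k : ℕ, (if i k = 1 then (2:ℝ) else 0) / 3 ^ (k + 1)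

/-!
Write `x = π i`, let `I n` be the level-`n` cylinder of `i` and `a n = -log μ (I n)`.
Distinct cylinders of level `n` are at least `3⁻ⁿ` apart, so `μ [x - r, x + r] ≤ μ (I n)` for
`r < 3⁻ⁿ`: the two-sided ratio at scale `r ≈ 3⁻ⁿ` is at least about `a n / (n log 3)`.
If the `m`-th symbol of `i` is "left", the right sibling of `I (m + 1)` lies in `[x, x + 3⁻ᵐ]`, so
the one-sided ratio at `3⁻ᵐ` is at most about `(a m - log p₂) / (m log 3)`. On a run of "right"
symbols `a` grows linearly, so `a n - t n log 3` is monotone along the run and is not larger (up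
to one step) at one of the two "left" symbols bounding it. Hence both liminfs agree unless `i` has
only finitely many "left" symbols, i.e. unless `x` is one of countably many right endpoints.
-/

theorem Filter.liminf_eq_liminf_of_le_of_frequently_lt {α : Type*} {f g : α → ℝ} {l : Filter α}
    {B : ℝ} (hgf : ∀ᶠ x in l, g x ≤ f x) (hg : IsBoundedUnder (· ≥ ·) l g)
    (hfB : ∃ᶠ x in l, f x ≤ B)
    (h : ∀ t ε, 0 < ε → (∃ᶠ x in l, g x < t) → ∃ᶠ x in l, f x < t + ε) :
    liminf f l = liminf g l := by
  have hf : IsBoundedUnder (· ≥ ·) l f := hg.mono_ge hgf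
  have hgB : IsCoboundedUnder (· ≥ ·) l g :=
    .of_frequently_le ((hfB.and_eventually hgf).mono fun _ hx ↦ hx.2.trans hx.1)
  refine le_antisymm (le_of_forall_pos_le_add fun ε hε ↦ ?_)
    (liminf_le_liminf hgf hg (.of_frequently_le hfB))
  have hfreq := h (liminf g l + ε / 2) (ε / 2) (half_pos hε)
    (frequently_lt_of_liminf_lt hgB (by linarith))
  calc liminf f l ≤ liminf g l + ε / 2 + ε / 2 :=
        liminf_le_of_frequently_le (hfreq.mono fun _ hx ↦ hx.le) hf
    _ = liminf g l + ε := by ring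

section Runs

variable {S : Set ℕ} {a : ℕ → ℝ} {c s : ℝ}

lemma exists_mem_ge_sub_mul_le (hrun : ∀ k ∉ S, a (k + 1) = a k + c) (hcs : c ≤ s) {n : ℕ}
    (hS : ∃ m ≥ n, m ∈ S) : ∃ m ≥ n, m ∈ S ∧ a m - s * m ≤ a n - s * n := by
  classical
  refine ⟨Nat.find hS, (Nat.find_spec hS).1, (Nat.find_spec hS).2, ?_⟩
  suffices ∀ k, n ≤ k → k ≤ Nat.find hS → a k - s * k ≤ a n - s * n from
    this _ (Nat.find_spec hS).1 le_rfl
  intro k hnk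
  induction k, hnk using Nat.le_induction with
  | base => exact fun _ ↦ le_rfl
  | succ k hnk ih =>
    intro hk
    have hkS : k ∉ S := fun hkS ↦ Nat.find_min hS (by omega) ⟨hnk, hkS⟩
    rw [hrun k hkS]
    push_cast
    linarith [ih (by omega)]

lemma exists_mem_le_sub_mul_le (hmono : Monotone a) (hrun : ∀ k ∉ S, a (k + 1) = a k + c)
    (hsc : s ≤ c) (hs : 0 ≤ s) {z n : ℕ} (hz : z ∈ S) (hzn : z ≤ n) :
    ∃ m ≥ z, m ∈ S ∧ a m - s * m ≤ a n - s * n + s := by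
  classical
  have hmS := Nat.findGreatest_spec hzn hz
  have hzm := Nat.le_findGreatest hzn hz
  have hmn := Nat.findGreatest_le (P := (· ∈ S)) n
  have hgap : ∀ k, Nat.findGreatest (· ∈ S) n < k → k ≤ n → k ∉ S :=
    fun _ ↦ Nat.findGreatest_is_greatest
  generalize Nat.findGreatest (· ∈ S) n = m at hmS hzm hmn hgap
  refine ⟨m, hzm, hmS, ?_⟩
  rcases hmn.eq_or_lt with rfl | hmn
  · linarith
  suffices ∀ k, m + 1 ≤ k → k ≤ n → a (m + 1) - s * (m + 1) ≤ a k - s * k by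
    linarith [this n hmn le_rfl, hmono m.le_succ]
  intro k hmk
  induction k, hmk using Nat.le_induction with
  | base => exact fun _ ↦ by push_cast; rfl
  | succ k hmk ih =>
    intro hkn
    rw [hrun k (hgap k (by omega) (by omega))]
    push_cast
    linarith [ih (by omega)]

/-- Between two consecutive elements of `S` the sequence `a k - s * k` moves with constant slope
`c - s`; so the nearest element of `S` after `n` (if `c ≤ s`) or before `n` (if `s ≤ c`) does at
least as well as `n`, up to the one step from that element into the run. -/
lemma frequently_mem_and_sub_mul_lt (hmono : Monotone a) (hrun : ∀ k ∉ S, a (k + 1) = a k + c)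
    (hs : 0 ≤ s) (hS : ∃ᶠ k in atTop, k ∈ S) {b : ℝ} (h : ∃ᶠ n in atTop, a n - s * n < b) :
    ∃ᶠ m in atTop, m ∈ S ∧ a m - s * m < b + s := by
  rw [frequently_atTop] at hS h ⊢
  intro N
  obtain ⟨z, hzN, hz⟩ := hS N
  obtain ⟨n, hzn, hn⟩ := h z
  rcases le_total c s with hcs | hsc
  · obtain ⟨m, hnm, hm, hle⟩ := exists_mem_ge_sub_mul_le hrun hcs (hS n)
    exact ⟨m, by omega, hm, by linarith⟩
  · obtain ⟨m, hzm, hm, hle⟩ := exists_mem_le_sub_mul_le hmono hrun hsc hs hz hzn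
    exact ⟨m, by omega, hm, by linarith⟩

end Runs

lemma neg_log_toReal_nonneg {q : ℝ≥0∞} (hq : q ≤ 1) : 0 ≤ -Real.log q.toReal :=
  neg_nonneg.2 <| Real.log_nonpos ENNReal.toReal_nonneg <| by
    simpa using ENNReal.toReal_mono ENNReal.one_ne_top hq

lemma log_toReal_div_log_nonneg {q : ℝ≥0∞} (hq : q ≤ 1) {r : ℝ} (hr0 : 0 < r) (hr1 : r < 1) :
    0 ≤ Real.log q.toReal / Real.log r :=
  div_nonneg_of_nonpos (by linarith [neg_log_toReal_nonneg hq]) (Real.log_neg hr0 hr1).le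

lemma log_toReal_div_log_le_of_le {q q' : ℝ≥0∞} (hq : 0 < q) (hq' : q' ≠ ∞) (hqq' : q ≤ q')
    {r : ℝ} (hr0 : 0 < r) (hr1 : r < 1) :
    Real.log q'.toReal / Real.log r ≤ Real.log q.toReal / Real.log r :=
  div_le_div_of_nonpos_of_le (Real.log_neg hr0 hr1).le <| Real.log_le_log
    (ENNReal.toReal_pos hq.ne' (ne_top_of_le_ne_top hq' hqq')) (ENNReal.toReal_mono hq' hqq')

lemma Real.log_inv_pow (x : ℝ) (n : ℕ) : Real.log (x⁻¹ ^ n) = -(n * Real.log x) := by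
  rw [Real.log_pow, Real.log_inv, mul_neg]

lemma exists_pow_succ_le_lt_pow {y r : ℝ} (hy : y < 1) (hr0 : 0 < r) (hr1 : r < 1) :
    ∃ n : ℕ, y ^ (n + 1) ≤ r ∧ r < y ^ n := by
  classical
  have hex : ∃ k : ℕ, y ^ k ≤ r := (exists_pow_lt_of_lt_one hr0 hy).imp fun _ h ↦ h.le
  obtain ⟨n, hn⟩ := Nat.exists_eq_add_one_of_ne_zero (n := Nat.find hex) fun h0 ↦ by
    have := Nat.find_spec hex
    rw [h0, pow_zero] at this
    linarith
  exact ⟨n, hn ▸ Nat.find_spec hex, not_le.1 (Nat.find_min hex (by omega))⟩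

lemma antitone_compl_Icc_neg_one_add :
    Antitone fun s : ℝ ↦ (Icc (-s) (1 + s))ᶜ :=
  fun _ _ hst ↦ compl_subset_compl.2 (Icc_subset_Icc (by linarith) (by linarith))

namespace Cantor

def ternaryDigit (d : Fin 2) : Fin 3 := ⟨2 * d, by omega⟩

noncomputable def digitMap (d : Fin 2) (x : ℝ) : ℝ := x / 3 + 2 * d / 3

noncomputable def cylinderLeft (i : ℕ → Fin 2) (n : ℕ) : ℝ :=
  ∑ k ∈ Finset.range n, Real.ofDigitsTerm (fun k ↦ ternaryDigit (i k)) k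

noncomputable def cylinderMap (i : ℕ → Fin 2) (n : ℕ) (y : ℝ) : ℝ :=
  cylinderLeft i n + y * 3⁻¹ ^ n

noncomputable def cylinderMass (p : Fin 2 → ℝ≥0∞) (i : ℕ → Fin 2) (n : ℕ) : ℝ≥0∞ :=
  ∏ k ∈ Finset.range n, p (i k)

lemma cantorPi_eq_ofDigits (i : ℕ → Fin 2) :
    cantorPi i = Real.ofDigits (fun k ↦ ternaryDigit (i k)) := by
  refine tsum_congr fun k ↦ ?_
  rcases Fin.exists_fin_two.mp ⟨i k, rfl⟩ with h | h <;>
    simp [h, Real.ofDigitsTerm, ternaryDigit, div_eq_mul_inv]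

lemma cantorPi_eq_cylinderLeft_add (i : ℕ → Fin 2) (n : ℕ) :
    cantorPi i = cylinderLeft i n + 3⁻¹ ^ n * cantorPi (fun k ↦ i (k + n)) := by
  rw [cantorPi_eq_ofDigits, cantorPi_eq_ofDigits, Real.ofDigits_eq_sum_add_ofDigits _ n]
  simp [cylinderLeft, inv_pow]

lemma cylinderLeft_le_cantorPi (i : ℕ → Fin 2) (n : ℕ) : cylinderLeft i n ≤ cantorPi i := by
  rw [cantorPi_eq_cylinderLeft_add i n, cantorPi_eq_ofDigits]
  have := Real.ofDigits_nonneg (fun k ↦ ternaryDigit (i (k + n)))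
  nlinarith [pow_pos (by norm_num : (0:ℝ) < 3⁻¹) n]

lemma cantorPi_le_cylinderLeft_add (i : ℕ → Fin 2) (n : ℕ) :
    cantorPi i ≤ cylinderLeft i n + 3⁻¹ ^ n := by
  rw [cantorPi_eq_cylinderLeft_add i n, cantorPi_eq_ofDigits]
  have := Real.ofDigits_le_one (fun k ↦ ternaryDigit (i (k + n)))
  nlinarith [pow_pos (by norm_num : (0:ℝ) < 3⁻¹) n]

lemma cylinderLeft_nonneg (i : ℕ → Fin 2) (n : ℕ) : 0 ≤ cylinderLeft i n :=
  Finset.sum_nonneg fun _ _ ↦ Real.ofDigitsTerm_nonneg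

lemma cylinderLeft_succ_of_eq_zero {i : ℕ → Fin 2} {n : ℕ} (h : i n = 0) :
    cylinderLeft i (n + 1) = cylinderLeft i n := by
  simp [cylinderLeft, Finset.sum_range_succ, Real.ofDigitsTerm, ternaryDigit, h]

lemma cylinderLeft_succ' (i : ℕ → Fin 2) (n : ℕ) :
    cylinderLeft i (n + 1) = digitMap (i 0) (cylinderLeft (fun k ↦ i (k + 1)) n) := by
  simp only [cylinderLeft, digitMap, Finset.sum_range_succ', Finset.sum_div, Real.ofDigitsTerm,
    ternaryDigit]
  push_cast
  congr 1
  · refine Finset.sum_congr rfl fun k _ ↦ ?_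
    rw [pow_succ]; field_simp
  · ring

lemma cylinderLeft_add_le_one (i : ℕ → Fin 2) (n : ℕ) : cylinderLeft i n + 3⁻¹ ^ n ≤ 1 := by
  induction n generalizing i with
  | zero => simp [cylinderLeft]
  | succ n ih =>
    have hd : ((i 0 : ℕ) : ℝ) ≤ 1 := by exact_mod_cast Nat.le_of_lt_succ (i 0).isLt
    have := ih fun k ↦ i (k + 1)
    rw [cylinderLeft_succ', digitMap, pow_succ]
    linarith

@[simp]
lemma cylinderMap_zero (i : ℕ → Fin 2) : cylinderMap i 0 = id := by
  ext y; simp [cylinderMap, cylinderLeft]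

lemma cylinderMap_succ' (i : ℕ → Fin 2) (n : ℕ) :
    cylinderMap i (n + 1) = digitMap (i 0) ∘ cylinderMap (fun k ↦ i (k + 1)) n := by
  ext y
  simp only [cylinderMap, Function.comp, cylinderLeft_succ', digitMap, pow_succ]
  ring

lemma cylinderMass_succ' (p : Fin 2 → ℝ≥0∞) (i : ℕ → Fin 2) (n : ℕ) :
    cylinderMass p i (n + 1) = p (i 0) * cylinderMass p (fun k ↦ i (k + 1)) n := by
  rw [cylinderMass, Finset.prod_range_succ', mul_comm]; rfl

noncomputable def cylinderCost (p : Fin 2 → ℝ≥0∞) (i : ℕ → Fin 2) (n : ℕ) : ℝ :=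
  ∑ k ∈ Finset.range n, -Real.log (p (i k)).toReal

section Cost

variable {p : Fin 2 → ℝ≥0∞}

lemma log_toReal_cylinderMass (hp0 : ∀ d, p d ≠ 0) (hp1 : ∀ d, p d ≤ 1) (i : ℕ → Fin 2)
    (n : ℕ) : Real.log (cylinderMass p i n).toReal = -cylinderCost p i n := by
  rw [cylinderMass, ENNReal.toReal_prod, Real.log_prod, cylinderCost, Finset.sum_neg_distrib,
    neg_neg]
  exact fun k _ ↦ (ENNReal.toReal_pos (hp0 _) (ne_top_of_le_ne_top ENNReal.one_ne_top (hp1 _))).ne'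

lemma cylinderMass_ne_zero (hp : ∀ d, p d ≠ 0) (i : ℕ → Fin 2) (n : ℕ) :
    cylinderMass p i n ≠ 0 :=
  Finset.prod_ne_zero_iff.2 fun k _ ↦ hp (i k)

lemma cylinderMass_ne_top (hp1 : ∀ d, p d ≤ 1) (i : ℕ → Fin 2) (n : ℕ) :
    cylinderMass p i n ≠ ∞ :=
  ENNReal.prod_ne_top fun k _ ↦ ne_top_of_le_ne_top ENNReal.one_ne_top (hp1 (i k))

lemma cylinderCost_succ (i : ℕ → Fin 2) (n : ℕ) :
    cylinderCost p i (n + 1) = cylinderCost p i n + -Real.log (p (i n)).toReal :=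
  Finset.sum_range_succ ..

lemma cylinderCost_nonneg (hp1 : ∀ d, p d ≤ 1) (i : ℕ → Fin 2) (n : ℕ) :
    0 ≤ cylinderCost p i n :=
  Finset.sum_nonneg fun _ _ ↦ neg_log_toReal_nonneg (hp1 _)

lemma monotone_cylinderCost (hp1 : ∀ d, p d ≤ 1) (i : ℕ → Fin 2) :
    Monotone (cylinderCost p i) :=
  monotone_nat_of_le_succ fun n ↦ by
    rw [cylinderCost_succ]; linarith [neg_log_toReal_nonneg (hp1 (i n))]

lemma cylinderCost_le (hp1 : ∀ d, p d ≤ 1) (i : ℕ → Fin 2) (n : ℕ) :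
    cylinderCost p i n ≤ n * ∑ d, -Real.log (p d).toReal := by
  have := Finset.sum_le_card_nsmul (Finset.range n) _ _ fun k _ ↦
    Finset.single_le_sum (f := fun d ↦ -Real.log (p d).toReal)
      (fun d _ ↦ neg_log_toReal_nonneg (hp1 d)) (Finset.mem_univ (i k))
  rwa [Finset.card_range, nsmul_eq_mul] at this

end Cost

def IsSelfSimilar (p : Fin 2 → ℝ≥0∞) (μ : Measure ℝ) : Prop :=
  μ = ∑ d, p d • μ.map (digitMap d)

lemma measurable_digitMap (d : Fin 2) : Measurable (digitMap d) := by
  unfold digitMap; fun_prop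

variable {p : Fin 2 → ℝ≥0∞} {μ : Measure ℝ}

namespace IsSelfSimilar

lemma apply (h : IsSelfSimilar p μ) {s : Set ℝ} (hs : MeasurableSet s) :
    μ s = ∑ d, p d * μ (digitMap d ⁻¹' s) := by
  conv_lhs => rw [h]
  simp [Measure.map_apply (measurable_digitMap _) hs]

lemma mul_measure_preimage_le (h : IsSelfSimilar p μ) (d : Fin 2) {s : Set ℝ}
    (hs : MeasurableSet s) : p d * μ (digitMap d ⁻¹' s) ≤ μ s := by
  rw [h.apply hs]
  exact Finset.single_le_sum (f := fun d ↦ p d * μ (digitMap d ⁻¹' s)) (fun _ _ ↦ zero_le)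
    (Finset.mem_univ d)

-- Both `digitMap`s shrink the distance to `[0, 1]` by the factor `3`.
lemma measure_compl_Icc_le (h : IsSelfSimilar p μ) (hp : ∑ d, p d ≤ 1) (s : ℝ) :
    μ (Icc (-s) (1 + s))ᶜ ≤ μ (Icc (-(3 * s)) (1 + 3 * s))ᶜ := by
  have hpre : ∀ d, digitMap d ⁻¹' (Icc (-s) (1 + s))ᶜ ⊆ (Icc (-(3 * s)) (1 + 3 * s))ᶜ := by
    intro d y hy
    contrapose hy
    have hd : ((d : ℕ) : ℝ) ≤ 1 := by exact_mod_cast Nat.le_of_lt_succ d.isLt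
    simp only [mem_compl_iff, not_not, mem_preimage, mem_Icc, digitMap] at hy ⊢
    constructor <;> linarith [hy.1, hy.2, Nat.cast_nonneg (α := ℝ) (d : ℕ)]
  calc μ (Icc (-s) (1 + s))ᶜ = ∑ d, p d * μ (digitMap d ⁻¹' (Icc (-s) (1 + s))ᶜ) :=
        h.apply measurableSet_Icc.compl
    _ ≤ ∑ d, p d * μ (Icc (-(3 * s)) (1 + 3 * s))ᶜ := by gcongr with d; exact hpre d
    _ = (∑ d, p d) * μ (Icc (-(3 * s)) (1 + 3 * s))ᶜ := Finset.sum_mul .. |>.symm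
    _ ≤ μ (Icc (-(3 * s)) (1 + 3 * s))ᶜ := mul_le_of_le_one_left zero_le hp

lemma measure_compl_Icc_eq_zero (h : IsSelfSimilar p μ) (hp : ∑ d, p d ≤ 1)
    [IsFiniteMeasure μ] {s : ℝ} (hs : 0 < s) : μ (Icc (-s) (1 + s))ᶜ = 0 := by
  set V : ℕ → Set ℝ := fun n ↦ (Icc (-(3 ^ n * s)) (1 + 3 ^ n * s))ᶜ
  have hle : ∀ n, μ (Icc (-s) (1 + s))ᶜ ≤ μ (V n) := by
    intro n
    induction n with
    | zero => simp [V]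
    | succ n ih =>
      refine ih.trans ?_
      simpa [V, pow_succ, mul_comm _ (3 : ℝ), mul_assoc] using h.measure_compl_Icc_le hp _
  have hempty : ⋂ n, V n = ∅ := by
    refine eq_empty_of_forall_notMem fun y hy ↦ ?_
    obtain ⟨n, hn⟩ := pow_unbounded_of_one_lt (|y| / s) (by norm_num : (1 : ℝ) < 3)
    have hyn := mem_iInter.1 hy n
    rw [div_lt_iff₀ hs] at hn
    simp only [V, mem_compl_iff, mem_Icc, not_and_or, not_le] at hyn
    cases hyn <;> cases abs_cases y <;> linarith
  have hV_anti : Antitone V := antitone_compl_Icc_neg_one_add.comp_monotone fun _ _ hmn ↦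
    mul_le_mul_of_nonneg_right (pow_le_pow_right₀ (by norm_num : (1 : ℝ) ≤ 3) hmn) hs.le
  have htend := tendsto_measure_iInter_atTop (μ := μ)
    (fun n ↦ measurableSet_Icc.compl.nullMeasurableSet) hV_anti ⟨0, measure_ne_top μ _⟩
  rw [hempty, measure_empty] at htend
  exact le_antisymm (ge_of_tendsto' htend hle) zero_le

lemma measure_compl_Icc_zero_one (h : IsSelfSimilar p μ) (hp : ∑ d, p d ≤ 1)
    [IsFiniteMeasure μ] : μ (Icc 0 1)ᶜ = 0 := by
  have hunion :
      (Icc (0 : ℝ) 1)ᶜ = ⋃ n : ℕ, (Icc (-(1 / ((n : ℝ) + 1))) (1 + 1 / ((n : ℝ) + 1)))ᶜ := by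
    refine Subset.antisymm (fun y hy ↦ ?_) (iUnion_subset fun n ↦ by
      simpa using antitone_compl_Icc_neg_one_add (by positivity : (0 : ℝ) ≤ 1 / (n + 1)))
    simp only [mem_compl_iff, mem_Icc, not_and_or, not_le] at hy
    obtain ⟨n, hn⟩ : ∃ n : ℕ, 1 / ((n : ℝ) + 1) < max (-y) (y - 1) :=
      exists_nat_one_div_lt (by rcases hy with hy | hy <;> simp [hy])
    refine mem_iUnion.2 ⟨n, ?_⟩
    simp only [mem_compl_iff, mem_Icc, not_and_or, not_le]
    rcases lt_max_iff.1 hn with hn | hn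
    · left; linarith
    · right; linarith
  rw [hunion]
  exact measure_iUnion_null fun n ↦ h.measure_compl_Icc_eq_zero hp (by positivity)

lemma cylinderMass_mul_measure_preimage_le (h : IsSelfSimilar p μ) (n : ℕ) (i : ℕ → Fin 2)
    {s : Set ℝ} (hs : MeasurableSet s) :
    cylinderMass p i n * μ (cylinderMap i n ⁻¹' s) ≤ μ s := by
  induction n generalizing i s with
  | zero => simp [cylinderMass, cylinderMap_zero]
  | succ n ih =>
    rw [cylinderMass_succ', cylinderMap_succ', preimage_comp, mul_assoc]
    calc p (i 0) * (cylinderMass p _ n * μ (cylinderMap _ n ⁻¹' (digitMap (i 0) ⁻¹' s)))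
        ≤ p (i 0) * μ (digitMap (i 0) ⁻¹' s) := by
          gcongr; exact ih _ (measurable_digitMap _ hs)
      _ ≤ μ s := h.mul_measure_preimage_le _ hs

variable [IsProbabilityMeasure μ]

lemma measure_le_cylinderMass (h : IsSelfSimilar p μ) (hsupp : μ (Icc 0 1)ᶜ = 0) (n : ℕ)
    (i : ℕ → Fin 2) {s : Set ℝ} (hs : MeasurableSet s)
    (hsub : s ⊆ Ioo (cylinderLeft i n - 3⁻¹ ^ n) (cylinderLeft i n + 2 * 3⁻¹ ^ n)) :
    μ s ≤ cylinderMass p i n := by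
  induction n generalizing i s with
  | zero => simpa [cylinderMass] using prob_le_one
  | succ n ih =>
    obtain ⟨L, hL_def⟩ : ∃ L, cylinderLeft (fun k ↦ i (k + 1)) n = L := ⟨_, rfl⟩
    obtain ⟨δ, hδ_def⟩ : ∃ δ, (3⁻¹ : ℝ) ^ n = δ := ⟨_, rfl⟩
    have hL : 0 ≤ L := hL_def ▸ cylinderLeft_nonneg _ _
    have hLδ : L + δ ≤ 1 := hL_def ▸ hδ_def ▸ cylinderLeft_add_le_one _ _
    have hδ : δ ≤ 1 := hδ_def ▸ pow_le_one₀ (by norm_num) (by norm_num)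
    have hpre : ∀ d : Fin 2, digitMap d ⁻¹' s ⊆
        Ioo (L - δ + 2 * ((i 0 : ℝ) - d)) (L + 2 * δ + 2 * ((i 0 : ℝ) - d)) := by
      intro d y hy
      have := hsub hy
      simp only [mem_Ioo, cylinderLeft_succ', digitMap, pow_succ, hL_def, hδ_def] at this ⊢
      constructor <;> linarith [this.1, this.2]
    -- the first-level cylinders are `1 / 3` apart, so the other branch sees `s` outside `[0, 1]`
    have hnull : ∀ d, d ≠ i 0 → μ (digitMap d ⁻¹' s) = 0 := by
      intro d hd
      refine measure_mono_null (fun y hy ↦ ?_) hsupp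
      have hy' := hpre d hy
      generalize i 0 = e at hd hy'
      simp only [mem_Ioo, mem_compl_iff, mem_Icc, not_and_or, not_le] at hy' ⊢
      fin_cases d <;> fin_cases e <;> simp at hd <;> norm_num at hy' ⊢
      · right; linarith [hy'.1]
      · left; linarith [hy'.2]
    rw [h.apply hs, Finset.sum_eq_single (i 0) (fun d _ hd ↦ by rw [hnull d hd, mul_zero])
      (by simp), cylinderMass_succ']
    gcongr
    exact ih _ (measurable_digitMap _ hs) (by simpa [hL_def, hδ_def] using hpre (i 0))

lemma measure_Icc_sub_add_le_cylinderMass (h : IsSelfSimilar p μ) (hsupp : μ (Icc 0 1)ᶜ = 0)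
    (i : ℕ → Fin 2) {n : ℕ} {r : ℝ} (hr : r < 3⁻¹ ^ n) :
    μ (Icc (cantorPi i - r) (cantorPi i + r)) ≤ cylinderMass p i n := by
  refine h.measure_le_cylinderMass hsupp n i measurableSet_Icc fun y hy ↦ ?_
  have := cylinderLeft_le_cantorPi i n
  have := cantorPi_le_cylinderLeft_add i n
  constructor <;> linarith [hy.1, hy.2]

lemma mul_cylinderMass_le_measure_Icc (h : IsSelfSimilar p μ) (hsupp : μ (Icc 0 1)ᶜ = 0)
    {i : ℕ → Fin 2} {m : ℕ} (hm : i m = 0) :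
    p 1 * cylinderMass p i m ≤ μ (Icc (cantorPi i) (cantorPi i + 3⁻¹ ^ m)) := by
  have hunit : μ (Icc 0 1) = 1 := (prob_compl_eq_zero_iff measurableSet_Icc).1 hsupp
  have hright : p 1 ≤ μ (Icc (2 / 3) 1) := by
    calc p 1 = p 1 * μ (Icc 0 1) := by rw [hunit, mul_one]
      _ ≤ p 1 * μ (digitMap 1 ⁻¹' Icc (2 / 3) 1) := by
          gcongr
          intro y hy
          simp only [mem_preimage, mem_Icc, digitMap, Fin.isValue, Fin.val_one, Nat.cast_one]
          constructor <;> linarith [hy.1, hy.2]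
      _ ≤ μ (Icc (2 / 3) 1) := h.mul_measure_preimage_le 1 measurableSet_Icc
  have hsub : Icc (2 / 3) 1 ⊆ cylinderMap i m ⁻¹' Icc (cantorPi i) (cantorPi i + 3⁻¹ ^ m) := by
    intro y hy
    have hlow := cylinderLeft_le_cantorPi i m
    have hupp := cantorPi_le_cylinderLeft_add i (m + 1)
    rw [cylinderLeft_succ_of_eq_zero hm, pow_succ] at hupp
    have hδ : (0 : ℝ) < 3⁻¹ ^ m := by positivity
    simp only [mem_preimage, mem_Icc, cylinderMap] at hy ⊢
    constructor <;> nlinarith [hy.1, hy.2]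
  calc p 1 * cylinderMass p i m = cylinderMass p i m * p 1 := mul_comm _ _
    _ ≤ cylinderMass p i m * μ (cylinderMap i m ⁻¹' Icc (cantorPi i) (cantorPi i + 3⁻¹ ^ m)) := by
        gcongr; exact hright.trans (measure_mono hsub)
    _ ≤ _ := h.cylinderMass_mul_measure_preimage_le m i measurableSet_Icc

lemma measure_Icc_add_pos (h : IsSelfSimilar p μ) (hsupp : μ (Icc 0 1)ᶜ = 0)
    (hp : ∀ d, p d ≠ 0) {i : ℕ → Fin 2} (hi : ∃ᶠ k in atTop, i k = 0) {r : ℝ} (hr : 0 < r) :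
    0 < μ (Icc (cantorPi i) (cantorPi i + r)) := by
  obtain ⟨K, hK⟩ := exists_pow_lt_of_lt_one hr (by norm_num : (3⁻¹ : ℝ) < 1)
  obtain ⟨m, hm, hKm⟩ := (hi.and_eventually (eventually_ge_atTop K)).exists
  have hmr : (3⁻¹ : ℝ) ^ m ≤ r :=
    (pow_le_pow_of_le_one (by norm_num) (by norm_num) hKm).trans hK.le
  calc 0 < p 1 * cylinderMass p i m :=
        pos_iff_ne_zero.2 (mul_ne_zero (hp 1) (cylinderMass_ne_zero hp i m))
    _ ≤ μ (Icc (cantorPi i) (cantorPi i + 3⁻¹ ^ m)) := h.mul_cylinderMass_le_measure_Icc hsupp hm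
    _ ≤ _ := measure_mono (Icc_subset_Icc le_rfl (by linarith))

lemma cylinderCost_div_le (h : IsSelfSimilar p μ) (hsupp : μ (Icc 0 1)ᶜ = 0)
    (hp0 : ∀ d, p d ≠ 0) (hp1 : ∀ d, p d ≤ 1) (i : ℕ → Fin 2) {n : ℕ} {r : ℝ}
    (hr₁ : (3⁻¹ : ℝ) ^ (n + 1) ≤ r) (hr₂ : r < 3⁻¹ ^ n)
    (hpos : 0 < μ (Icc (cantorPi i - r) (cantorPi i + r))) :
    cylinderCost p i n / ((n + 1) * Real.log 3) ≤
      Real.log (μ (Icc (cantorPi i - r) (cantorPi i + r))).toReal / Real.log r := by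
  have hr0 : 0 < r := (pow_pos (by norm_num) _).trans_le hr₁
  have hr1 : r < 1 := hr₂.trans_le (pow_le_one₀ (by norm_num) (by norm_num))
  have hlogr : 0 < -Real.log r := neg_pos.2 (Real.log_neg hr0 hr1)
  have hlogr' : -Real.log r ≤ (n + 1) * Real.log 3 := by
    have := Real.log_le_log (pow_pos (by norm_num) _) hr₁
    rw [Real.log_inv_pow] at this
    push_cast at this
    linarith
  have hcost : cylinderCost p i n ≤
      -Real.log (μ (Icc (cantorPi i - r) (cantorPi i + r))).toReal := by
    have := Real.log_le_log (ENNReal.toReal_pos hpos.ne' (measure_ne_top _ _))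
      (ENNReal.toReal_mono (cylinderMass_ne_top hp1 i n)
        (h.measure_Icc_sub_add_le_cylinderMass hsupp i hr₂))
    rw [log_toReal_cylinderMass hp0 hp1] at this
    linarith
  calc cylinderCost p i n / ((n + 1) * Real.log 3)
      ≤ cylinderCost p i n / -Real.log r :=
        div_le_div_of_nonneg_left (cylinderCost_nonneg hp1 i n) hlogr hlogr'
    _ ≤ -Real.log (μ (Icc (cantorPi i - r) (cantorPi i + r))).toReal / -Real.log r :=
        div_le_div_of_nonneg_right hcost hlogr.le
    _ = _ := neg_div_neg_eq _ _

lemma div_le_cylinderCost_add (h : IsSelfSimilar p μ) (hsupp : μ (Icc 0 1)ᶜ = 0)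
    (hp0 : ∀ d, p d ≠ 0) (hp1 : ∀ d, p d ≤ 1) {i : ℕ → Fin 2} {m : ℕ} (hm : i m = 0) :
    Real.log (μ (Icc (cantorPi i) (cantorPi i + 3⁻¹ ^ m))).toReal / Real.log (3⁻¹ ^ m) ≤
      (cylinderCost p i m + -Real.log (p 1).toReal) / (m * Real.log 3) := by
  have hp1top : p 1 ≠ ∞ := ne_top_of_le_ne_top ENNReal.one_ne_top (hp1 1)
  have hlog := Real.log_le_log
    (ENNReal.toReal_pos (mul_ne_zero (hp0 1) (cylinderMass_ne_zero hp0 i m))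
      (ENNReal.mul_ne_top hp1top (cylinderMass_ne_top hp1 i m)))
    (ENNReal.toReal_mono (measure_ne_top _ _) (h.mul_cylinderMass_le_measure_Icc hsupp hm))
  rw [ENNReal.toReal_mul, Real.log_mul (ENNReal.toReal_pos (hp0 1) hp1top).ne'
    (ENNReal.toReal_pos (cylinderMass_ne_zero hp0 i m) (cylinderMass_ne_top hp1 i m)).ne',
    log_toReal_cylinderMass hp0 hp1] at hlog
  rw [Real.log_inv_pow, div_neg, ← neg_div]
  gcongr
  linarith

lemma frequently_cylinderCost_sub_lt (h : IsSelfSimilar p μ) (hsupp : μ (Icc 0 1)ᶜ = 0)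
    (hp0 : ∀ d, p d ≠ 0) (hp1 : ∀ d, p d ≤ 1) {i : ℕ → Fin 2} (hi : ∃ᶠ k in atTop, i k = 0)
    {t : ℝ} (hG : ∃ᶠ r in 𝓝[>] 0,
      Real.log (μ (Icc (cantorPi i - r) (cantorPi i + r))).toReal / Real.log r < t) :
    ∃ᶠ n in atTop, cylinderCost p i n - t * Real.log 3 * n < t * Real.log 3 := by
  rw [frequently_atTop]
  intro N
  obtain ⟨r, hGr, hr0, hrN⟩ :=
    (hG.and_eventually (Ioo_mem_nhdsGT (by positivity : (0 : ℝ) < 3⁻¹ ^ N))).exists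
  obtain ⟨n, hn₁, hn₂⟩ := exists_pow_succ_le_lt_pow (by norm_num : (3⁻¹ : ℝ) < 1) hr0
    (hrN.trans_le (pow_le_one₀ (by norm_num) (by norm_num)))
  refine ⟨n, ?_, ?_⟩
  · have := (pow_lt_pow_iff_right_of_lt_one₀ (by norm_num) (by norm_num)).1 (hn₁.trans_lt hrN)
    omega
  · have hpos : 0 < μ (Icc (cantorPi i - r) (cantorPi i + r)) :=
      (h.measure_Icc_add_pos hsupp hp0 hi hr0).trans_le
        (measure_mono (Icc_subset_Icc (by linarith) le_rfl))
    have := (h.cylinderCost_div_le hsupp hp0 hp1 i hn₁ hn₂ hpos).trans_lt hGr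
    rw [div_lt_iff₀ (by positivity)] at this
    linarith

lemma frequently_log_div_log_lt (h : IsSelfSimilar p μ) (hsupp : μ (Icc 0 1)ᶜ = 0)
    (hp0 : ∀ d, p d ≠ 0) (hp1 : ∀ d, p d ≤ 1) {i : ℕ → Fin 2} (hi : ∃ᶠ k in atTop, i k = 0)
    {t ε : ℝ} (ht : 0 ≤ t) (hε : 0 < ε)
    (hcost : ∃ᶠ n in atTop, cylinderCost p i n - t * Real.log 3 * n < t * Real.log 3) :
    ∃ᶠ r in 𝓝[>] 0,
      Real.log (μ (Icc (cantorPi i) (cantorPi i + r))).toReal / Real.log r < t + ε := by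
  have hlog3 : 0 < Real.log 3 := Real.log_pos (by norm_num)
  have hzero := frequently_mem_and_sub_mul_lt (S := {k | i k = 0})
    (c := -Real.log (p 1).toReal) (monotone_cylinderCost hp1 i)
    (fun k hk ↦ by rw [cylinderCost_succ, (Fin.exists_fin_two.1 ⟨i k, rfl⟩).resolve_left hk])
    (by positivity) hi hcost
  have hlarge : ∀ᶠ m : ℕ in atTop,
      (2 * (t * Real.log 3) + -Real.log (p 1).toReal) / (ε * Real.log 3) < m :=
    tendsto_natCast_atTop_atTop.eventually_gt_atTop _
  refine (tendsto_pow_atTop_nhdsWithin_zero_of_lt_one (by norm_num) (by norm_num : (3⁻¹ : ℝ) < 1)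
    ).frequently ((hzero.and_eventually hlarge).mono ?_)
  rintro m ⟨⟨hm, hcm⟩, hmlarge⟩
  have hc := neg_log_toReal_nonneg (hp1 1)
  rw [div_lt_iff₀ (by positivity)] at hmlarge
  refine (h.div_le_cylinderCost_add hsupp hp0 hp1 hm).trans_lt ?_
  have hm_pos : 0 < (m : ℝ) * Real.log 3 := by nlinarith
  rw [div_lt_iff₀ hm_pos]
  nlinarith

theorem liminf_log_measure_Icc_div_log_eq (h : IsSelfSimilar p μ) (hsupp : μ (Icc 0 1)ᶜ = 0)
    (hp0 : ∀ d, p d ≠ 0) (hp1 : ∀ d, p d ≤ 1) {i : ℕ → Fin 2} (hi : ∃ᶠ k in atTop, i k = 0) :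
    liminf (fun r ↦ Real.log (μ (Icc (cantorPi i) (cantorPi i + r))).toReal / Real.log r)
        (𝓝[>] 0) =
      liminf (fun r ↦ Real.log (μ (Icc (cantorPi i - r) (cantorPi i + r))).toReal / Real.log r)
        (𝓝[>] 0) := by
  have hlog3 : 0 < Real.log 3 := Real.log_pos (by norm_num)
  have hunit : ∀ᶠ r in 𝓝[>] (0 : ℝ), 0 < r ∧ r < 1 := Ioo_mem_nhdsGT one_pos
  have hG0 : ∀ᶠ r in 𝓝[>] (0 : ℝ),
      0 ≤ Real.log (μ (Icc (cantorPi i - r) (cantorPi i + r))).toReal / Real.log r :=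
    hunit.mono fun r hr ↦ log_toReal_div_log_nonneg prob_le_one hr.1 hr.2
  set W := ∑ d, -Real.log (p d).toReal
  have hW : 0 ≤ W := Finset.sum_nonneg fun d _ ↦ neg_log_toReal_nonneg (hp1 d)
  refine Filter.liminf_eq_liminf_of_le_of_frequently_lt (B := W / Real.log 3 + 2) ?_
    (isBoundedUnder_of_eventually_ge hG0) ?_ fun t ε hε hG ↦ ?_
  · filter_upwards [hunit] with r hr
    exact log_toReal_div_log_le_of_le (h.measure_Icc_add_pos hsupp hp0 hi hr.1)
      (measure_ne_top _ _) (measure_mono (Icc_subset_Icc (by linarith) le_rfl)) hr.1 hr.2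
  · have hcost : ∀ n : ℕ, cylinderCost p i n - (W / Real.log 3 + 1) * Real.log 3 * n <
        (W / Real.log 3 + 1) * Real.log 3 := by
      intro n
      have hWL : (W / Real.log 3 + 1) * Real.log 3 = W + Real.log 3 := by field_simp
      rw [hWL]
      nlinarith [cylinderCost_le hp1 i n, (n.cast_nonneg : (0 : ℝ) ≤ n)]
    refine (h.frequently_log_div_log_lt hsupp hp0 hp1 hi (by positivity) one_pos
      (Eventually.frequently (Eventually.of_forall hcost))).mono fun r hr ↦ ?_
    linarith
  · obtain ⟨r, hr, hr0⟩ := (hG.and_eventually hG0).exists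
    exact h.frequently_log_div_log_lt hsupp hp0 hp1 hi (hr0.trans hr.le) hε
      (h.frequently_cylinderCost_sub_lt hsupp hp0 hp1 hi hG)

end IsSelfSimilar

lemma exists_finset_eq_ite_of_eventually_ne_zero {i : ℕ → Fin 2}
    (h : ∀ᶠ k in atTop, i k ≠ 0) : ∃ s : Finset ℕ, i = fun k ↦ if k ∈ s then 0 else 1 := by
  classical
  obtain ⟨N, hN⟩ := eventually_atTop.1 h
  refine ⟨(Finset.range N).filter (i · = 0), funext fun k ↦ ?_⟩
  by_cases hk : i k = 0
  · have hkN : k < N := not_le.1 fun hNk ↦ hN k hNk hk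
    simp [hk, hkN]
  · simpa [hk] using (Fin.exists_fin_two.1 ⟨i k, rfl⟩).resolve_left hk

end Cantor

open Cantor in
theorem stmt_14 (p₁ p₂ : ℝ≥0∞) (hp₁ : 0 < p₁) (hp₂ : 0 < p₂) (hsum : p₁ + p₂ = 1)
    (μ : Measure ℝ) (hprob : IsProbabilityMeasure μ)
    (hself : μ = p₁ • Measure.map (fun x : ℝ => x / 3) μ
        + p₂ • Measure.map (fun x : ℝ => x / 3 + 2 / 3) μ) :
    ∃ D : Set ℝ, D.Countable ∧
      ∀ i : ℕ → Fin 2, cantorPi i ∉ D →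
        liminf (fun r : ℝ =>
            Real.log (μ (Icc (cantorPi i) (cantorPi i + r))).toReal / Real.log r)
          (𝓝[>] 0)
        = liminf (fun r : ℝ =>
            Real.log (μ (Icc (cantorPi i - r) (cantorPi i + r))).toReal / Real.log r)
          (𝓝[>] 0) := by
  have hμ : IsSelfSimilar ![p₁, p₂] μ := by
    have h0 : digitMap 0 = fun x ↦ x / 3 := by ext; simp [digitMap]
    have h1 : digitMap 1 = fun x ↦ x / 3 + 2 / 3 := by ext; simp [digitMap]
    simpa [IsSelfSimilar, Fin.sum_univ_two, h0, h1] using hself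
  have hsupp : μ (Icc 0 1)ᶜ = 0 := hμ.measure_compl_Icc_zero_one (by simp [hsum])
  have hp0 : ∀ d, ![p₁, p₂] d ≠ 0 := Fin.forall_fin_two.2 ⟨hp₁.ne', hp₂.ne'⟩
  have hp1 : ∀ d, ![p₁, p₂] d ≤ 1 := Fin.forall_fin_two.2 ⟨hsum ▸ le_self_add, hsum ▸ le_add_self⟩
  refine ⟨range fun s : Finset ℕ ↦ cantorPi fun k ↦ if k ∈ s then 0 else 1, countable_range _,
    fun i hi ↦ hμ.liminf_log_measure_Icc_div_log_eq hsupp hp0 hp1 ?_⟩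
  by_contra hfin
  obtain ⟨s, rfl⟩ := exists_finset_eq_ite_of_eventually_ne_zero (not_frequently.1 hfin)
  exact hi ⟨s, rfl⟩
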